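/- arXiv:2104.15003 — 3 statements merged into one kernel-verified Lean document; each statement's English description precedes it below -/
import Mathlib

section
/- Let L be a finite type of value-locations with |L| = C + X, and let f : L → α be the content function. Suppose there is a finite subset V of L with |V| = C on which f is injective (the C distinct stored values). Then for every finite subset U of L with |U| = 2X + t, at least t locations l ∈ U store a unique value, i.e., the set {l ∈ U | ∀ l' : L, f l' = f l → l' = l} has cardinality at least t. (This is Lemma 5 of the paper: among each 2X + t ≤ C + X value-locations there are at least t in which a unique value is stored.) -/
/-! Call a location *shared* if some other location holds the same value. The partner of a
shared location in `V` is a shared location outside `V`, so `f` maps the shared locations of `V`,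
on which it is injective, into the values of the shared locations of `Vᶜ`. Hence at most
`|Vᶜ| = X` shared locations lie in `V`, at most `X` more lie outside, and all but `2X`
locations of `U` are unique. -/

open Set

section

variable {L α : Type*} (f : L → α)

def sharedLocs : Set L := {l | ∃ l', f l' = f l ∧ l' ≠ l}

variable {f}

theorem ncard_sharedLocs_inter_le_sdiff [Finite L] {V : Set L} (hinj : InjOn f V) :
    (sharedLocs f ∩ V).ncard ≤ (sharedLocs f \ V).ncard := by
  have hpartner : f '' (sharedLocs f ∩ V) ⊆ f '' (sharedLocs f \ V) := by
    rintro _ ⟨l, ⟨⟨l', hfl, hne⟩, hlV⟩, rfl⟩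
    have hl'V : l' ∉ V := fun hl'V => hne (hinj hl'V hlV hfl)
    exact ⟨l', ⟨⟨l, hfl.symm, hne.symm⟩, hl'V⟩, hfl⟩
  calc (sharedLocs f ∩ V).ncard = (f '' (sharedLocs f ∩ V)).ncard :=
        ((hinj.mono inter_subset_right).ncard_image).symm
    _ ≤ (f '' (sharedLocs f \ V)).ncard := ncard_le_ncard hpartner
    _ ≤ (sharedLocs f \ V).ncard := ncard_image_le (toFinite _)

theorem ncard_sharedLocs_le [Finite L] {V : Set L} (hinj : InjOn f V) :
    (sharedLocs f).ncard ≤ 2 * Vᶜ.ncard := by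
  have hsplit := ncard_inter_add_ncard_sdiff_eq_ncard (sharedLocs f) V
  have hout : (sharedLocs f \ V).ncard ≤ Vᶜ.ncard := ncard_le_ncard (sdiff_subset_compl _ _)
  have hin := ncard_sharedLocs_inter_le_sdiff hinj
  omega

theorem ncard_le_ncard_unique_add_sharedLocs [Finite L] (U : Set L) :
    U.ncard ≤ {l | l ∈ U ∧ ∀ l' : L, f l' = f l → l' = l}.ncard + (sharedLocs f).ncard := by
  refine (ncard_le_ncard fun l hl => ?_).trans (ncard_union_le _ _)
  by_cases hu : ∀ l' : L, f l' = f l → l' = l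
  · exact Or.inl ⟨hl, hu⟩
  · push Not at hu
    exact Or.inr hu

end

/-- Lemma 5 of the paper: if the memory consists of `C + X` value-locations and
`C` of them (the set `V`) hold pairwise distinct values, then among any
`2X + t` value-locations `U` at least `t` store a value that occurs nowhere
else in memory. -/
theorem unique_locations_lower_bound
    {L α : Type*} [Fintype L] (C X t : ℕ) (f : L → α)
    (hL : Fintype.card L = C + X)
    (V : Finset L) (hV : V.card = C) (hinj : Set.InjOn f (V : Set L))
    (U : Finset L) (hU : U.card = 2 * X + t) :
    t ≤ {l : L | l ∈ U ∧ ∀ l' : L, f l' = f l → l' = l}.ncard := by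
  have hVc : (V : Set L)ᶜ.ncard = X := by
    rw [ncard_compl, ncard_coe_finset, Nat.card_eq_fintype_card, hL, hV]
    omega
  have hshared := ncard_sharedLocs_le hinj
  have hcover := ncard_le_ncard_unique_add_sharedLocs (f := f) (U : Set L)
  simp only [Finset.mem_coe, ncard_coe_finset, hU] at hcover
  omega
end

section
/- Let L be a finite type of value-locations with content function f : L → α, and let V be a finite subset of L on which f is injective. Then the number of locations l ∈ V whose value also occurs at some other location, i.e., the cardinality of {l ∈ V | ∃ l' : L, l' ≠ l ∧ f l' = f l}, is at most |L| − |V|. (This is the key counting step in the proof of Lemma 5: every location outside V can violate the uniqueness of at most one location in V.) -/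
/-- Key counting step in the proof of Lemma 5: if `f` is injective on `V`,
then the number of locations in `V` whose value also occurs at some other
location is at most `|L| - |V|`. -/
theorem non_unique_locations_upper_bound
    {L α : Type*} [Fintype L] (f : L → α)
    (V : Finset L) (hinj : Set.InjOn f (V : Set L)) :
    {l : L | l ∈ V ∧ ∃ l' : L, l' ≠ l ∧ f l' = f l}.ncard
      ≤ Fintype.card L - V.card := by
  classical
  have hset : {l : L | l ∈ V ∧ ∃ l' : L, l' ≠ l ∧ f l' = f l}
      = ↑(V.filter (fun l => ∃ l' : L, l' ≠ l ∧ f l' = f l)) := by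
    ext l; simp
  rw [hset, Set.ncard_coe_finset]
  set S := V.filter (fun l => ∃ l' : L, l' ≠ l ∧ f l' = f l) with hS
  set g : L → L := fun l =>
    if h : ∃ l' : L, l' ≠ l ∧ f l' = f l then h.choose else l with hg
  have hgspec : ∀ l ∈ S, g l ≠ l ∧ f (g l) = f l := by
    intro l hl
    rw [hS, Finset.mem_filter] at hl
    simp only [hg, dif_pos hl.2]
    exact hl.2.choose_spec
  have hmaps : ∀ l ∈ S, g l ∈ Vᶜ := by
    intro l hl
    have hlV : l ∈ V := (Finset.mem_filter.mp hl).1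
    obtain ⟨hne, hf⟩ := hgspec l hl
    rw [Finset.mem_compl]
    intro hgV
    exact hne (hinj hgV hlV hf)
  have hinj' : Set.InjOn g S := by
    intro a ha b hb hab
    have haV : a ∈ V := (Finset.mem_filter.mp ha).1
    have hbV : b ∈ V := (Finset.mem_filter.mp hb).1
    have : f a = f b := by
      rw [← (hgspec a ha).2, ← (hgspec b hb).2, hab]
    exact hinj haV hbV this
  have h := Finset.card_le_card_of_injOn g hmaps hinj'
  simpa [Finset.card_compl] using h
end

section
/- Let L be a finite type of value-locations with |L| = C + X and content function f : L → α. Suppose there is a subset V of L with |V| = C на which f is injective. Let l : Fin k → L be an injective family of distinct locations, v : Fin k → α an injective family of distinct values, and let I be a subset of Fin k with |I| ≥ 2X + t such that f (l i) = v i for all i ∈ I. Then there exists a subset J of I with |J| ≥ t such that for every j ∈ J the value v j resides in exactly the one value-location l j, i.e., f l' = v j implies l' = l j for every l' : L. (This is the combinatorial conclusion of Lemma 6 of the paper: among 2X + t distinct values placed at 2X + t distinct locations of a memory holding C distinct values, at least t of them reside in exactly one value-location.) -/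
/-- Combinatorial conclusion of Lemma 6 of the paper: in a memory of `C + X`
value-locations holding `C` distinct values (on `V`), among `|I| ≥ 2X + t`
distinct values `v i` placed at distinct locations `l i`, at least `t` of them
reside in exactly one value-location. -/
theorem many_values_in_unique_locations
    {L α : Type*} [Fintype L] (C X t k : ℕ) (f : L → α)
    (hL : Fintype.card L = C + X)
    (V : Finset L) (hV : V.card = C) (hinj : Set.InjOn f (V : Set L))
    (l : Fin k → L) (hl : Function.Injective l)
    (v : Fin k → α) (hv : Function.Injective v)
    (I : Finset (Fin k)) (hI : 2 * X + t ≤ I.card)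
    (hplaced : ∀ i ∈ I, f (l i) = v i) :
    ∃ J : Finset (Fin k), J ⊆ I ∧ t ≤ J.card ∧
      ∀ j ∈ J, f (l j) = v j ∧ ∀ l' : L, f l' = v j → l' = l j := by
  classical
  set B := I.filter (fun i => ¬ ∀ l' : L, f l' = v i → l' = l i) with hB
  have hBsub : B ⊆ I := Finset.filter_subset _ _
  have hex : ∀ i : Fin k, ∃ l' : L, i ∈ B → f l' = v i ∧ l' ∉ V := by
    intro i
    by_cases hi : i ∈ B
    · simp only [hB, Finset.mem_filter] at hi
      obtain ⟨hiI, hbad⟩ := hi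
      push_neg at hbad
      obtain ⟨l', hfl', hne⟩ := hbad
      by_cases hmem : l i ∈ V
      · refine ⟨l', fun _ => ⟨hfl', fun hl'V => hne (hinj hl'V hmem ?_)⟩⟩
        rw [hfl', hplaced i hiI]
      · exact ⟨l i, fun _ => ⟨hplaced i hiI, hmem⟩⟩
    · exact ⟨l i, fun h => absurd h hi⟩
  choose g hg using hex
  have hcard : B.card ≤ X := by
    have h1 : B.card ≤ Vᶜ.card := by
      apply Finset.card_le_card_of_injOn g
      · intro i hi
        simp [ (hg i hi).2 ]
      · intro i hi j hj hgij
        apply hv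
        rw [← (hg i hi).1, ← (hg j hj).1, hgij]
    have h2 : Vᶜ.card = X := by
      have := Finset.card_compl V
      omega
    omega
  refine ⟨I \ B, Finset.sdiff_subset, ?_, ?_⟩
  · have : (I \ B).card = I.card - B.card := Finset.card_sdiff_of_subset hBsub
    omega
  · intro j hj
    rw [Finset.mem_sdiff] at hj
    obtain ⟨hjI, hjB⟩ := hj
    have : ∀ l' : L, f l' = v j → l' = l j := by
      by_contra h
      exact hjB (Finset.mem_filter.mpr ⟨hjI, h⟩)
    exact ⟨hplaced j hjI, this⟩
end
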